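/- Let ξ = ((m_1,n_1),…,(m_z,n_z)) be a Newton polygon, and let u = (r,i), v = (q,j) ∈ T(ξ) with δ(u) = 0, δ(v) = 1, u < v in the linear order of S(ξ), and r + 1 < q. Then there exists an element t = (x,l) ∈ T(ξ) with r < x < q and u < t < v. -/

import Mathlib

open scoped Classical

noncomputable section

/-- Symbols `(r, i)` (1-indexed component `r`, 1-indexed position `i`). -/
abbrev Symb : Type := ℕ × ℕ

/-- A Newton polygon: a finite list of coprime pairs `(m_r, n_r)` with `m_r + n_r > 0`
and weakly decreasing slopes `n_r / (m_r + n_r)`. -/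
structure NewtonPolygon where
  seg : List (ℕ × ℕ)
  coprime : ∀ p ∈ seg, Nat.Coprime p.1 p.2
  pos : ∀ p ∈ seg, 0 < p.1 + p.2
  slopes : ∀ r q : Fin seg.length, r ≤ q →
    ((seg.get q).2 : ℚ) / (((seg.get q).1 : ℚ) + ((seg.get q).2 : ℚ)) ≤
      ((seg.get r).2 : ℚ) / (((seg.get r).1 : ℚ) + ((seg.get r).2 : ℚ))

namespace NewtonPolygon

/-- The number `z` of segments. -/
def z (ξ : NewtonPolygon) : ℕ := ξ.seg.length

/-- `m_r` (1-indexed). -/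
def m (ξ : NewtonPolygon) (r : ℕ) : ℕ := (ξ.seg.getD (r - 1) (0, 0)).1

/-- `n_r` (1-indexed). -/
def n (ξ : NewtonPolygon) (r : ℕ) : ℕ := (ξ.seg.getD (r - 1) (0, 0)).2

/-- `h_r = m_r + n_r`. -/
def h (ξ : NewtonPolygon) (r : ℕ) : ℕ := ξ.m r + ξ.n r

/-- Membership in the symbol set `T(ξ) = {(r,i) : 1 ≤ r ≤ z, 1 ≤ i ≤ h_r}`. -/
def mem (ξ : NewtonPolygon) (t : Symb) : Prop :=
  1 ≤ t.1 ∧ t.1 ≤ ξ.z ∧ 1 ≤ t.2 ∧ t.2 ≤ ξ.h t.1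

/-- The symbol set `T(ξ)` as a finset. -/
def Tfin (ξ : NewtonPolygon) : Finset Symb :=
  ((Finset.Icc 1 ξ.z) ×ˢ (Finset.Icc 1 (ξ.seg.foldr (fun p s => p.1 + p.2 + s) 0))).filter
    (fun t => t.2 ≤ ξ.h t.1)

/-- The map `δ : T(ξ) → {0,1}`; `δ(r,i) = 1` iff `i ≤ m_r`. -/
def dlt (ξ : NewtonPolygon) (t : Symb) : ℕ := if t.2 ≤ ξ.m t.1 then 1 else 0

/-- The bijection `π(r, i) = (r, ((i - m_r - 1) mod h_r) + 1)`. -/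
def pmap (ξ : NewtonPolygon) (t : Symb) : Symb :=
  (t.1, (((t.2 : ℤ) - (ξ.m t.1 : ℤ) - 1) % ((ξ.h t.1 : ℤ))).toNat + 1)

/-- The inverse of `π`: `π⁻¹(r, i) = (r, ((i + m_r - 1) mod h_r) + 1)`. -/
def pinv (ξ : NewtonPolygon) (t : Symb) : Symb :=
  (t.1, (((t.2 : ℤ) + (ξ.m t.1 : ℤ) - 1) % ((ξ.h t.1 : ℤ))).toNat + 1)

/-- Binary expansion `b(t) = ∑_{k ≥ 1} δ(π^{-k}(t)) · 2^{-k}`. -/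
def bexp (ξ : NewtonPolygon) (t : Symb) : ℝ :=
  ∑' k : ℕ, (ξ.dlt (ξ.pinv^[k + 1] t) : ℝ) / 2 ^ (k + 1)

/-- The linear order on `T(ξ)`: `t < t'` iff `b(t) < b(t')`, or `b(t) = b(t')` and
`t` is in an earlier component. -/
def slt (ξ : NewtonPolygon) (t t' : Symb) : Prop :=
  ξ.bexp t < ξ.bexp t' ∨ (ξ.bexp t = ξ.bexp t' ∧ t.1 < t'.1)

/-- The length `ℓ(ξ)`: the number of pairs `t < t'` with `δ(t) = 0` and `δ(t') = 1`. -/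
def len (ξ : NewtonPolygon) : ℕ :=
  ((ξ.Tfin ×ˢ ξ.Tfin).filter (fun p => ξ.slt p.1 p.2 ∧ ξ.dlt p.1 = 0 ∧ ξ.dlt p.2 = 1)).card

/-- `π' = τ ∘ π`, the permutation of the small modification by `(u, v)`. -/
def pmod (ξ : NewtonPolygon) (u v : Symb) (t : Symb) : Symb := Equiv.swap u v (ξ.pmap t)

/-- The inverse of `π'`. -/
def pmodInv (ξ : NewtonPolygon) (u v : Symb) (t : Symb) : Symb := ξ.pinv (Equiv.swap u v t)

/-- `b'(t) = ∑_{k ≥ 1} δ(π'^{-k}(t)) · 2^{-k}` of the small modification by `(u, v)`. -/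
def bmod (ξ : NewtonPolygon) (u v : Symb) (t : Symb) : ℝ :=
  ∑' k : ℕ, (ξ.dlt ((ξ.pmodInv u v)^[k + 1] t) : ℝ) / 2 ^ (k + 1)

/-- The order of the small modification by `(u, v)`: the order of `S(ξ)` with the
positions of `u` and `v` exchanged. -/
def lt0 (ξ : NewtonPolygon) (u v : Symb) (t t' : Symb) : Prop :=
  ξ.slt (Equiv.swap u v t) (Equiv.swap u v t')

/-- `R` is a specialization of `S(ξ)` by `(u, v)`: a strict linear order on `T(ξ)`
such that `t ≺ t'` implies `b'(t) ≤ b'(t')`. -/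
def IsSpec (ξ : NewtonPolygon) (u v : Symb) (R : Symb → Symb → Prop) : Prop :=
  (∀ t ∈ ξ.Tfin, ¬ R t t) ∧
  (∀ t ∈ ξ.Tfin, ∀ t' ∈ ξ.Tfin, ∀ t'' ∈ ξ.Tfin, R t t' → R t' t'' → R t t'') ∧
  (∀ t ∈ ξ.Tfin, ∀ t' ∈ ξ.Tfin, t ≠ t' → R t t' ∨ R t' t) ∧
  (∀ t ∈ ξ.Tfin, ∀ t' ∈ ξ.Tfin, R t t' → ξ.bmod u v t ≤ ξ.bmod u v t')

/-- The length `ℓ(≺)` of an order `R`: the number of pairs `t ≺ t'` in `T(ξ)` with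
`δ(t) = 0` and `δ(t') = 1`. -/
def lenR (ξ : NewtonPolygon) (R : Symb → Symb → Prop) : ℕ :=
  ((ξ.Tfin ×ˢ ξ.Tfin).filter (fun p => R p.1 p.2 ∧ ξ.dlt p.1 = 0 ∧ ξ.dlt p.2 = 1)).card

/-- There exists a generic specialization of `S(ξ)` by `(u, v)`. -/
def ExGeneric (ξ : NewtonPolygon) (u v : Symb) : Prop :=
  ∃ R : Symb → Symb → Prop, ξ.IsSpec u v R ∧ (ξ.lenR R : ℤ) = (ξ.len : ℤ) - 1

/-- `α_k = π'^k(u)`. -/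
def alpha (ξ : NewtonPolygon) (u v : Symb) (k : ℕ) : Symb := (ξ.pmod u v)^[k] u

/-- `β_k = π'^k(v)`. -/
def beta (ξ : NewtonPolygon) (u v : Symb) (k : ℕ) : Symb := (ξ.pmod u v)^[k] v

/-- The set `A_k` computed with respect to an order `R`. -/
def AsetOf (ξ : NewtonPolygon) (u v : Symb) (R : Symb → Symb → Prop) (k : ℕ) : Finset Symb :=
  ξ.Tfin.filter (fun t =>
    (if k = 0 then ξ.dlt t = 0 else t.1 ≠ v.1 ∧ ξ.dlt t = ξ.dlt (ξ.alpha u v k)) ∧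
    R t (ξ.alpha u v k) ∧ R (ξ.alpha u v (k + 1)) (ξ.pmod u v t))

/-- The maximum of a finset for an order `R`. -/
def maxOf (R : Symb → Symb → Prop) (s : Finset Symb) : Symb :=
  if hmax : ∃ t, t ∈ s ∧ ∀ t' ∈ s, t' ≠ t → R t' t then hmax.choose else (0, 0)

/-- The minimum of a finset for an order `R`. -/
def minOf (R : Symb → Symb → Prop) (s : Finset Symb) : Symb :=
  if hmin : ∃ t, t ∈ s ∧ ∀ t' ∈ s, t' ≠ t → R t t' then hmin.choose else (0, 0)

/-- The pairs `(t, t')` reversed in a step of Construction A: `t = α_k` and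
`α_k <_{k-1} t' ≤_{k-1} w` where `w = π'(t_max)`. -/
def revA (R : Symb → Symb → Prop) (a w : Symb) (t t' : Symb) : Prop :=
  t = a ∧ R t t' ∧ (R t' w ∨ t' = w)

/-- One step of Construction A. -/
def stepA (R : Symb → Symb → Prop) (a w : Symb) : Symb → Symb → Prop :=
  fun t t' => (R t t' ∧ ¬ revA R a w t t') ∨ revA R a w t' t

/-- The pairs `(t, t')` reversed in a step of Construction B: `t' = β_k` and
`w ≤_{k-1} t <_{k-1} β_k` where `w = π'(t_min)`. -/
def revB (R : Symb → Symb → Prop) (b w : Symb) (t t' : Symb) : Prop :=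
  t' = b ∧ R t t' ∧ (R w t ∨ t = w)

/-- One step of Construction B. -/
def stepB (R : Symb → Symb → Prop) (b w : Symb) : Symb → Symb → Prop :=
  fun t t' => (R t t' ∧ ¬ revB R b w t t') ∨ revB R b w t' t

/-- The order `<_k` of Construction A (for `k ≥ 1`, meaningful when `A_{k-1} ≠ ∅`). -/
def ordA (ξ : NewtonPolygon) (u v : Symb) : ℕ → Symb → Symb → Prop
  | 0 => ξ.lt0 u v
  | k + 1 =>
      stepA (ordA ξ u v k) (ξ.alpha u v (k + 1))
        (ξ.pmod u v (maxOf (ordA ξ u v k) (ξ.AsetOf u v (ordA ξ u v k) k)))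

/-- The set `A_k` of Construction A. -/
def Aset (ξ : NewtonPolygon) (u v : Symb) (k : ℕ) : Finset Symb :=
  ξ.AsetOf u v (ordA ξ u v k) k

/-- The set `B_k` computed with respect to an order `R`. -/
def BsetOf (ξ : NewtonPolygon) (u v : Symb) (R : Symb → Symb → Prop) (k : ℕ) : Finset Symb :=
  ξ.Tfin.filter (fun t =>
    (if k = 0 then ξ.dlt t = 1 else ξ.dlt t = ξ.dlt (ξ.beta u v k)) ∧
    R (ξ.beta u v k) t ∧ R (ξ.pmod u v t) (ξ.beta u v (k + 1)))

/-- The order `<_{a+k}` of Construction B (for `k ≥ 1`, meaningful when `B_{k-1} ≠ ∅`). -/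
def ordB (ξ : NewtonPolygon) (u v : Symb) (a : ℕ) : ℕ → Symb → Symb → Prop
  | 0 => ordA ξ u v a
  | k + 1 =>
      stepB (ordB ξ u v a k) (ξ.beta u v (k + 1))
        (ξ.pmod u v (minOf (ordB ξ u v a k) (ξ.BsetOf u v (ordB ξ u v a k) k)))

/-- The set `B_k` of Construction B. -/
def Bset (ξ : NewtonPolygon) (u v : Symb) (a k : ℕ) : Finset Symb :=
  ξ.BsetOf u v (ordB ξ u v a k) k

end NewtonPolygon

namespace NP6

/-- digit -/
def D (m h a K : ℕ) : ℕ := if (a + K * m) % h < m then 1 else 0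

/-- prefix count -/
def S (m h a K : ℕ) : ℕ := (a + K * m) / h

lemma D_le_one (m h a K : ℕ) : D m h a K ≤ 1 := by
  unfold D; split <;> omega

lemma S_zero {m h a : ℕ} (ha : a < h) : S m h a 0 = 0 := by
  simp [S, Nat.div_eq_of_lt, ha]

lemma S_succ {m h : ℕ} (hm : m ≤ h) (hh : 0 < h) (a K : ℕ) :
    S m h a (K + 1) = S m h a K + D m h a (K + 1) := by
  unfold S D
  set b := a + K * m with hb
  have hKm : a + (K + 1) * m = b + m := by rw [hb]; ring
  rw [hKm]
  have e1 := Nat.div_add_mod b h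
  have e2 := Nat.div_add_mod (b + m) h
  have m1 : b % h < h := Nat.mod_lt _ hh
  have m2 : (b + m) % h < h := Nat.mod_lt _ hh
  have dich : (b + m) / h = b / h ∨ (b + m) / h = b / h + 1 := by
    have h1 : b / h ≤ (b + m) / h := Nat.div_le_div_right (by omega)
    have h2 : (b + m) / h ≤ b / h + 1 := by
      calc (b + m) / h ≤ (b + h) / h := Nat.div_le_div_right (by omega)
        _ = b / h + 1 := Nat.add_div_right _ hh
    omega
  rcases dich with hq | hq <;> rw [hq] at e2 ⊢ <;>
    [skip; rw [Nat.mul_add, Nat.mul_one] at e2] <;> split <;> omega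

lemma S_mono {m h : ℕ} (hm : m ≤ h) (hh : 0 < h) (a K : ℕ) :
    S m h a K ≤ S m h a (K + 1) := by
  rw [S_succ hm hh]; omega

lemma S_period {m h : ℕ} (hh : 0 < h) (a K : ℕ) :
    S m h a (K + h) = S m h a K + m := by
  unfold S
  have : a + (K + h) * m = (a + K * m) + h * m := by ring
  rw [this, Nat.add_mul_div_left _ _ hh]

lemma D_period (m h a K : ℕ) : D m h a (K + h) = D m h a K := by
  unfold D
  have : a + (K + h) * m = (a + K * m) + h * m := by ring
  rw [this, Nat.add_mul_mod_self_left]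

/-- window upper bound -/
lemma window_upper {h : ℕ} (hh : 0 < h) (A B : ℕ) :
    (A + B) / h ≤ A / h + (B + h - 1) / h := by
  have key : A + B < (A / h + (B + h - 1) / h + 1) * h := by
    have e1 := Nat.div_add_mod A h
    have e2 := Nat.div_add_mod (B + h - 1) h
    have m1 : A % h < h := Nat.mod_lt _ hh
    have m2 : (B + h - 1) % h < h := Nat.mod_lt _ hh
    have expand : (A / h + (B + h - 1) / h + 1) * h
        = h * (A / h) + h * ((B + h - 1) / h) + h := by ring
    omega
  exact Nat.lt_succ_iff.mp ((Nat.div_lt_iff_lt_mul hh).mpr key)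

/-- window lower bound (superadditivity of div) -/
lemma window_lower {h : ℕ} (hh : 0 < h) (A B : ℕ) :
    A / h + B / h ≤ (A + B) / h := by
  rw [Nat.le_div_iff_mul_le hh, Nat.add_mul]
  exact Nat.add_le_add (Nat.div_mul_le_self A h) (Nat.div_mul_le_self B h)

lemma le_mul_ceil {h : ℕ} (hh : 0 < h) (A : ℕ) : A ≤ h * ((A + h - 1) / h) := by
  have e2 := Nat.div_add_mod (A + h - 1) h
  have m2 : (A + h - 1) % h < h := Nat.mod_lt _ hh
  omega

/-- ceil division is monotone along slopes -/
lemma ceil_mono {m h m' h' : ℕ} (hh : 0 < h) (hh' : 0 < h') (hs : m * h' ≤ m' * h) (L : ℕ) :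
    (L * m + h - 1) / h ≤ (L * m' + h' - 1) / h' := by
  set C := (L * m' + h' - 1) / h' with hC
  have hC1 : L * m' ≤ h' * C := le_mul_ceil hh' _
  have h4 : L * m ≤ C * h := by nlinarith
  have key : L * m + h - 1 < (C + 1) * h := by
    have : (C + 1) * h = C * h + h := by ring
    omega
  exact Nat.lt_succ_iff.mp ((Nat.div_lt_iff_lt_mul hh).mpr key)

/-- floor division is monotone along slopes -/
lemma floor_mono {m h m' h' : ℕ} (hh : 0 < h) (hh' : 0 < h') (hs : m * h' ≤ m' * h) (L : ℕ) :
    L * m / h ≤ L * m' / h' := by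
  rw [Nat.le_div_iff_mul_le hh']
  have h4 : L * m / h * h ≤ L * m := Nat.div_mul_le_self _ _
  nlinarith

lemma ceil_le_floor_add_one {h : ℕ} (hh : 0 < h) (A : ℕ) :
    (A + h - 1) / h ≤ A / h + 1 := by
  calc (A + h - 1) / h ≤ (A + h) / h := Nat.div_le_div_right (by omega)
    _ = A / h + 1 := Nat.add_div_right _ hh




noncomputable def Bv (m h a : ℕ) : ℝ := ∑' k : ℕ, (D m h a (k + 1) : ℝ) / 2 ^ (k + 1)


lemma term_nonneg (m h a : ℕ) (k : ℕ) : 0 ≤ (D m h a (k + 1) : ℝ) / 2 ^ (k + 1) := by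
  positivity

lemma term_le (m h a : ℕ) (k : ℕ) :
    (D m h a (k + 1) : ℝ) / 2 ^ (k + 1) ≤ 1 / 2 ^ (k + 1) := by
  have h1 : (D m h a (k + 1) : ℝ) ≤ 1 := by exact_mod_cast D_le_one m h a (k + 1)
  have h2 : (0:ℝ) < 2 ^ (k + 1) := by positivity
  exact (div_le_div_iff_of_pos_right h2).mpr h1

lemma summable_geo : Summable (fun k : ℕ => (1:ℝ) / 2 ^ (k + 1)) := by
  have : Summable (fun k : ℕ => ((1:ℝ)/2) ^ k * (1/2)) :=
    (summable_geometric_of_lt_one (by norm_num) (by norm_num)).mul_right _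
  refine this.congr fun k => ?_
  rw [div_pow, one_pow]
  field_simp
  ring

lemma summable_bv (m h a : ℕ) :
    Summable (fun k : ℕ => (D m h a (k + 1) : ℝ) / 2 ^ (k + 1)) :=
  Summable.of_nonneg_of_le (term_nonneg m h a) (term_le m h a) summable_geo

lemma tendsto_bv (m h a : ℕ) :
    Filter.Tendsto (fun N => ∑ k ∈ Finset.range N, (D m h a (k + 1) : ℝ) / 2 ^ (k + 1))
      Filter.atTop (nhds (Bv m h a)) :=
  (summable_bv m h a).hasSum.tendsto_sum_nat




lemma partial_abel {m1 h1 a1 m2 h2 a2 : ℕ} (hm1 : m1 ≤ h1) (hh1 : 0 < h1)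
    (hm2 : m2 ≤ h2) (hh2 : 0 < h2) (ha1 : a1 < h1) (ha2 : a2 < h2)
    (hS : ∀ K, S m1 h1 a1 K ≤ S m2 h2 a2 K) (N : ℕ) :
    ∑ k ∈ Finset.range N, (D m1 h1 a1 (k + 1) : ℝ) / 2 ^ (k + 1)
      ≤ ∑ k ∈ Finset.range N, (D m2 h2 a2 (k + 1) : ℝ) / 2 ^ (k + 1)
        + ((S m1 h1 a1 N : ℝ) - (S m2 h2 a2 N : ℝ)) / 2 ^ N := by
  induction N with
  | zero =>
      simp [S_zero ha1, S_zero ha2]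
  | succ N ih =>
      rw [Finset.sum_range_succ, Finset.sum_range_succ]
      have e1 : (S m1 h1 a1 (N + 1) : ℝ) = S m1 h1 a1 N + D m1 h1 a1 (N + 1) := by
        exact_mod_cast congrArg (Nat.cast (R := ℝ)) (S_succ hm1 hh1 a1 N)
      have e2 : (S m2 h2 a2 (N + 1) : ℝ) = S m2 h2 a2 N + D m2 h2 a2 (N + 1) := by
        exact_mod_cast congrArg (Nat.cast (R := ℝ)) (S_succ hm2 hh2 a2 N)
      have hSN : (S m1 h1 a1 N : ℝ) ≤ (S m2 h2 a2 N : ℝ) := by exact_mod_cast hS N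
      have hp : (0:ℝ) < 2 ^ N := by positivity
      have hp2 : (0:ℝ) < 2 ^ (N + 1) := by positivity
      have key' : (D m1 h1 a1 (N + 1) : ℝ) + 2 * ((S m1 h1 a1 N : ℝ) - S m2 h2 a2 N)
          ≤ (D m2 h2 a2 (N + 1) : ℝ)
            + ((S m1 h1 a1 (N + 1) : ℝ) - S m2 h2 a2 (N + 1)) := by
        linarith
      have key2 := (div_le_div_iff_of_pos_right hp2).mpr key'
      have split1 : ((D m1 h1 a1 (N + 1) : ℝ) + 2 * ((S m1 h1 a1 N : ℝ) - S m2 h2 a2 N)) / 2 ^ (N + 1)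
          = (D m1 h1 a1 (N + 1) : ℝ) / 2 ^ (N + 1)
            + ((S m1 h1 a1 N : ℝ) - S m2 h2 a2 N) / 2 ^ N := by
        rw [pow_succ]; field_simp
      have split2 : ((D m2 h2 a2 (N + 1) : ℝ)
            + ((S m1 h1 a1 (N + 1) : ℝ) - S m2 h2 a2 (N + 1))) / 2 ^ (N + 1)
          = (D m2 h2 a2 (N + 1) : ℝ) / 2 ^ (N + 1)
            + ((S m1 h1 a1 (N + 1) : ℝ) - S m2 h2 a2 (N + 1)) / 2 ^ (N + 1) :=
        add_div _ _ _
      rw [split1, split2] at key2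
      linarith

lemma Bv_mono {m1 h1 a1 m2 h2 a2 : ℕ} (hm1 : m1 ≤ h1) (hh1 : 0 < h1)
    (hm2 : m2 ≤ h2) (hh2 : 0 < h2) (ha1 : a1 < h1) (ha2 : a2 < h2)
    (hS : ∀ K, S m1 h1 a1 K ≤ S m2 h2 a2 K) :
    Bv m1 h1 a1 ≤ Bv m2 h2 a2 := by
  have hT : Filter.Tendsto (fun N =>
      (∑ k ∈ Finset.range N, (D m1 h1 a1 (k + 1) : ℝ) / 2 ^ (k + 1))
      - ∑ k ∈ Finset.range N, (D m2 h2 a2 (k + 1) : ℝ) / 2 ^ (k + 1))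
      Filter.atTop (nhds (Bv m1 h1 a1 - Bv m2 h2 a2)) :=
    (tendsto_bv m1 h1 a1).sub (tendsto_bv m2 h2 a2)
  have hle : Bv m1 h1 a1 - Bv m2 h2 a2 ≤ 0 := by
    refine le_of_tendsto' hT fun N => ?_
    have hpa := partial_abel hm1 hh1 hm2 hh2 ha1 ha2 hS N
    have hSN : (S m1 h1 a1 N : ℝ) ≤ (S m2 h2 a2 N : ℝ) := by exact_mod_cast hS N
    have hp : (0:ℝ) < 2 ^ N := by positivity
    have hnp : ((S m1 h1 a1 N : ℝ) - (S m2 h2 a2 N : ℝ)) / 2 ^ N ≤ 0 := by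
      apply div_nonpos_of_nonpos_of_nonneg <;> [linarith; positivity]
    linarith [hpa, hnp]
  linarith


lemma Bv_strict {m1 h1 a1 m2 h2 a2 j : ℕ} (hj : 1 ≤ j) (hh1 : 0 < h1)
    (hpre : ∀ K, 1 ≤ K → K < j → D m1 h1 a1 K = D m2 h2 a2 K)
    (hj1 : D m1 h1 a1 j = 0) (hj2 : D m2 h2 a2 j = 1) :
    Bv m1 h1 a1 < Bv m2 h2 a2 := by
  set t1 : ℕ → ℝ := fun k => (D m1 h1 a1 (k + 1) : ℝ) / 2 ^ (k + 1) with ht1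
  set t2 : ℕ → ℝ := fun k => (D m2 h2 a2 (k + 1) : ℝ) / 2 ^ (k + 1) with ht2
  have base : ∑ k ∈ Finset.range j, t1 k - ∑ k ∈ Finset.range j, t2 k
      = -(1 / 2 ^ j : ℝ) := by
    rw [← Finset.sum_sub_distrib]
    have hcongr : ∀ k ∈ Finset.range j, t1 k - t2 k
        = if k = j - 1 then -(1 / 2 ^ j : ℝ) else 0 := by
      intro k hk
      rw [Finset.mem_range] at hk
      by_cases hkj : k = j - 1
      · subst hkj
        have hj' : j - 1 + 1 = j := by omega
        rw [ht1, ht2]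
        simp only [hj', hj1, hj2, if_pos rfl]
        norm_num
      · rw [if_neg hkj, ht1, ht2]
        simp only
        rw [hpre (k + 1) (by omega) (by omega)]
        ring
    rw [Finset.sum_congr rfl hcongr, Finset.sum_ite_eq' (Finset.range j) (j - 1)]
    rw [if_pos (Finset.mem_range.mpr (by omega))]
  have main : ∀ L : ℕ,
      ∑ k ∈ Finset.range (j + L), t1 k - ∑ k ∈ Finset.range (j + L), t2 k
        ≤ -(1 / 2 ^ (j + L) : ℝ) - (if h1 ≤ L then (1 / 2 ^ (j + h1) : ℝ) else 0) := by
    intro L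
    induction L with
    | zero =>
        rw [if_neg (by omega)]
        simpa using le_of_eq base
    | succ L ih =>
        have hstep : j + (L + 1) = (j + L) + 1 := by omega
        rw [hstep, Finset.sum_range_succ, Finset.sum_range_succ]
        have ht2nn : 0 ≤ t2 (j + L) := by rw [ht2]; positivity
        by_cases hc : L + 1 = h1
        · have hD0 : D m1 h1 a1 (j + L + 1) = 0 := by
            have : j + L + 1 = j + h1 := by omega
            rw [this, D_period m1 h1 a1 j]
            exact hj1
          have ht1z : t1 (j + L) = 0 := by rw [ht1]; simp [hD0]
          have hind : ¬ h1 ≤ L := by omega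
          rw [if_neg hind] at ih
          have hjh : j + h1 = j + L + 1 := by omega
          rw [if_pos (by omega : h1 ≤ L + 1), ← hjh]
          have hpow : (1 / 2 ^ (j + L) : ℝ) = 1 / 2 ^ (j + L + 1) + 1 / 2 ^ (j + h1) := by
            rw [hjh, pow_succ]
            field_simp
            norm_num
          rw [hjh] at hpow
          rw [ht1z]
          rw [hjh]
          linarith [ih, ht2nn, hpow]
        · have ht1le : t1 (j + L) ≤ 1 / 2 ^ (j + L + 1) := by
            rw [ht1]; exact term_le _ _ _ _
          have hiff : (if h1 ≤ L + 1 then (1 / 2 ^ (j + h1) : ℝ) else 0)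
              = (if h1 ≤ L then (1 / 2 ^ (j + h1) : ℝ) else 0) := by
            by_cases hL : h1 ≤ L
            · rw [if_pos hL, if_pos (by omega)]
            · rw [if_neg hL, if_neg (by omega)]
          rw [hiff]
          have hpow : (1 / 2 ^ (j + L) : ℝ) = 2 * (1 / 2 ^ (j + L + 1)) := by
            rw [pow_succ]; field_simp
          linarith [ih, ht2nn, ht1le]
  have hT : Filter.Tendsto (fun N =>
      (∑ k ∈ Finset.range N, t1 k) - ∑ k ∈ Finset.range N, t2 k)
      Filter.atTop (nhds (Bv m1 h1 a1 - Bv m2 h2 a2)) :=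
    (tendsto_bv m1 h1 a1).sub (tendsto_bv m2 h2 a2)
  have hle : Bv m1 h1 a1 - Bv m2 h2 a2 ≤ -(1 / 2 ^ (j + h1) : ℝ) := by
    refine le_of_tendsto hT ?_
    rw [Filter.eventually_atTop]
    refine ⟨j + h1, fun N hN => ?_⟩
    obtain ⟨L, rfl⟩ : ∃ L, N = j + L := ⟨N - j, by omega⟩
    have hmain := main L
    have hL : h1 ≤ L := by omega
    rw [if_pos hL] at hmain
    have hpos : (0:ℝ) < 1 / 2 ^ (j + L) := by positivity
    linarith [hmain, hpos]
  have : (0:ℝ) < 1 / 2 ^ (j + h1) := by positivity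
  linarith


lemma S_window_upper {h : ℕ} (hh : 0 < h) (m a j L : ℕ) :
    S m h a (j + L) ≤ S m h a j + (L * m + h - 1) / h := by
  unfold S
  have e : a + (j + L) * m = (a + j * m) + L * m := by ring
  rw [e]
  exact window_upper hh _ _

lemma S_window_lower {h : ℕ} (hh : 0 < h) (m a j L : ℕ) :
    S m h a j + L * m / h ≤ S m h a (j + L) := by
  unfold S
  have e : a + (j + L) * m = (a + j * m) + L * m := by ring
  rw [e]
  exact window_lower hh _ _

lemma claimP {m1 h1 a1 m2 h2 a2 : ℕ} (hm1 : m1 ≤ h1) (hh1 : 0 < h1)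
    (hm2 : m2 ≤ h2) (hh2 : 0 < h2) (ha1 : a1 < h1) (ha2 : a2 < h2)
    (hs : m1 * h2 ≤ m2 * h1) (hb : Bv m1 h1 a1 ≤ Bv m2 h2 a2) :
    ∀ K, S m1 h1 a1 K ≤ S m2 h2 a2 K := by
  by_contra hcon
  push_neg at hcon
  classical
  obtain ⟨K0, hK0, hmin⟩ : ∃ K0, (S m2 h2 a2 K0 < S m1 h1 a1 K0)
      ∧ ∀ K, K < K0 → S m1 h1 a1 K ≤ S m2 h2 a2 K := by
    refine ⟨Nat.find hcon, Nat.find_spec hcon, fun K hK => ?_⟩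
    have := Nat.find_min hcon hK
    omega
  have hK0pos : 1 ≤ K0 := by
    rcases Nat.eq_zero_or_pos K0 with h0 | h0
    · rw [h0, S_zero ha1, S_zero ha2] at hK0; omega
    · exact h0
  obtain ⟨P, hP⟩ : ∃ P, K0 = P + 1 := ⟨K0 - 1, by omega⟩
  have e1 : S m1 h1 a1 (P + 1) = S m1 h1 a1 P + D m1 h1 a1 (P + 1) := S_succ hm1 hh1 a1 P
  have e2 : S m2 h2 a2 (P + 1) = S m2 h2 a2 P + D m2 h2 a2 (P + 1) := S_succ hm2 hh2 a2 P
  have hd1 := D_le_one m1 h1 a1 (P + 1)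
  have hd2 := D_le_one m2 h2 a2 (P + 1)
  have hminP : S m1 h1 a1 P ≤ S m2 h2 a2 P := hmin P (by omega)
  rw [hP] at hK0
  have hD1 : D m1 h1 a1 K0 = 1 := by rw [hP]; omega
  have hD2 : D m2 h2 a2 K0 = 0 := by rw [hP]; omega
  have hS0 : S m1 h1 a1 K0 = S m2 h2 a2 K0 + 1 := by rw [hP]; omega
  by_cases hexd : ∃ Kc, 1 ≤ Kc ∧ Kc < K0 ∧ D m1 h1 a1 Kc ≠ D m2 h2 a2 Kc
  · obtain ⟨j, ⟨hj1, hjK0, hjne⟩, hpre⟩ : ∃ j, (1 ≤ j ∧ j < K0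
        ∧ D m1 h1 a1 j ≠ D m2 h2 a2 j)
        ∧ ∀ K, 1 ≤ K → K < j → D m1 h1 a1 K = D m2 h2 a2 K := by
      refine ⟨Nat.find hexd, Nat.find_spec hexd, fun K hK1 hKj => ?_⟩
      have hmj := Nat.find_min hexd hKj
      push_neg at hmj
      obtain ⟨hjA, hjB, _⟩ := Nat.find_spec hexd
      exact hmj hK1 (by omega)
    by_cases hd : D m1 h1 a1 j = 1
    · have hd2' : D m2 h2 a2 j = 0 := by
        have := D_le_one m2 h2 a2 j
        omega
      have := Bv_strict (m1 := m2) (h1 := h2) (a1 := a2) (m2 := m1) (h2 := h1) (a2 := a1)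
        hj1 hh2 (fun K hK1 hK2 => (hpre K hK1 hK2).symm) hd2' hd
      linarith
    · have hd1' : D m1 h1 a1 j = 0 := by
        have := D_le_one m1 h1 a1 j
        omega
      have hd2' : D m2 h2 a2 j = 1 := by
        have := D_le_one m2 h2 a2 j
        omega
      have hSpre : ∀ K, K < j → S m1 h1 a1 K = S m2 h2 a2 K := by
        intro K
        induction K with
        | zero => intro _; rw [S_zero ha1, S_zero ha2]
        | succ K ih =>
            intro hK
            rw [S_succ hm1 hh1, S_succ hm2 hh2, ih (by omega),
              hpre (K + 1) (by omega) (by omega)]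
      have hSj : S m1 h1 a1 j + 1 = S m2 h2 a2 j := by
        obtain ⟨Q, hQ⟩ : ∃ Q, j = Q + 1 := ⟨j - 1, by omega⟩
        have f1 : S m1 h1 a1 (Q + 1) = S m1 h1 a1 Q + D m1 h1 a1 (Q + 1) :=
          S_succ hm1 hh1 a1 Q
        have f2 : S m2 h2 a2 (Q + 1) = S m2 h2 a2 Q + D m2 h2 a2 (Q + 1) :=
          S_succ hm2 hh2 a2 Q
        have heq := hSpre Q (by omega)
        rw [hQ, f1, f2, ← hQ, hd1', hd2', heq]
      obtain ⟨L, hK0j⟩ : ∃ L, K0 = j + L := ⟨K0 - j, by omega⟩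
      have w1 : S m1 h1 a1 K0 ≤ S m1 h1 a1 j + (L * m1 + h1 - 1) / h1 := by
        rw [hK0j]; exact S_window_upper hh1 m1 a1 j L
      have w2 : S m2 h2 a2 j + L * m2 / h2 ≤ S m2 h2 a2 K0 := by
        rw [hK0j]; exact S_window_lower hh2 m2 a2 j L
      have c1 : (L * m1 + h1 - 1) / h1 ≤ (L * m2 + h2 - 1) / h2 :=
        ceil_mono hh1 hh2 hs L
      have c2 : (L * m2 + h2 - 1) / h2 ≤ L * m2 / h2 + 1 :=
        ceil_le_floor_add_one hh2 _
      omega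
  · push_neg at hexd
    have := Bv_strict (m1 := m2) (h1 := h2) (a1 := a2) (m2 := m1) (h2 := h1) (a2 := a1)
      hK0pos hh2 (fun K hK1 hK2 => (hexd K hK1 hK2).symm) hD2 hD1
    linarith


lemma exists_mid {m1 h1 a1 m2 h2 a2 mx hx : ℕ} (hh1 : 0 < h1) (hh2 : 0 < h2)
    (hhx : 0 < hx) (ha1 : a1 < h1) (ha2 : a2 < h2)
    (hs1 : m1 * hx ≤ mx * h1) (hs2 : mx * h2 ≤ m2 * hx)
    (hP : ∀ K, S m1 h1 a1 K ≤ S m2 h2 a2 K) :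
    ∃ ax, ax < hx ∧ (∀ K, S m1 h1 a1 K ≤ S mx hx ax K)
      ∧ (∀ K, S mx hx ax K ≤ S m2 h2 a2 K) := by
  classical
  set F : ℕ → ℤ := fun K => (hx : ℤ) * S m1 h1 a1 K - K * mx with hF
  have hne : (Finset.Icc 1 h1).Nonempty := ⟨1, Finset.mem_Icc.mpr ⟨le_refl 1, hh1⟩⟩
  set A : ℤ := (Finset.Icc 1 h1).sup' hne F with hA
  -- every K ≥ 1 is dominated by A
  have hA_all : ∀ K, 1 ≤ K → F K ≤ A := by
    intro K
    induction K using Nat.strong_induction_on with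
    | _ K ih =>
      intro hK1
      by_cases hKh : K ≤ h1
      · exact Finset.le_sup' F (Finset.mem_Icc.mpr ⟨hK1, hKh⟩)
      · push_neg at hKh
        obtain ⟨K', hK'⟩ : ∃ K', K = K' + h1 := ⟨K - h1, by omega⟩
        have hper : S m1 h1 a1 K = S m1 h1 a1 K' + m1 := by
          rw [hK']; exact S_period hh1 a1 K'
        have hstep : F K ≤ F K' := by
          rw [hF]
          simp only
          rw [hper, hK']
          have hcast : (m1 : ℤ) * hx ≤ (mx : ℤ) * h1 := by exact_mod_cast hs1
          push_cast
          nlinarith [hcast]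
        exact le_trans hstep (ih K' (by omega) (by omega))
  -- A is at most hx - 1
  have hA_ub : A ≤ (hx : ℤ) - 1 := by
    rw [hA]
    refine Finset.sup'_le hne F fun K hK => ?_
    have hb1 : S m1 h1 a1 K ≤ (K * m1 + h1 - 1) / h1 := by
      unfold S
      refine Nat.div_le_div_right ?_
      omega
    have hb2 : (K * m1 + h1 - 1) / h1 ≤ (K * mx + hx - 1) / hx :=
      ceil_mono hh1 hhx hs1 K
    have hb3 : (K * mx + hx - 1) / hx * hx ≤ K * mx + hx - 1 := Nat.div_mul_le_self _ _
    have hb4 : hx * S m1 h1 a1 K ≤ K * mx + hx - 1 := by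
      calc hx * S m1 h1 a1 K ≤ hx * ((K * mx + hx - 1) / hx) :=
            Nat.mul_le_mul_left _ (le_trans hb1 hb2)
        _ = (K * mx + hx - 1) / hx * hx := Nat.mul_comm _ _
        _ ≤ K * mx + hx - 1 := hb3
      
    rw [hF]
    simp only
    have : (hx : ℤ) * S m1 h1 a1 K ≤ K * mx + hx - 1 := by
      have := hb4
      push_cast
      omega
    linarith
  refine ⟨(max A 0).toNat, ?_, ?_, ?_⟩
  · have h1' : max A 0 ≤ (hx : ℤ) - 1 := by
      rcases le_total A 0 with h | h
      · rw [max_eq_right h]; omega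
      · rw [max_eq_left h]; exact hA_ub
    omega
  · intro K
    rcases Nat.eq_zero_or_pos K with h0 | h0
    · rw [h0, S_zero ha1]; exact Nat.zero_le _
    · have hFK := hA_all K h0
      have hAm : A ≤ ((max A 0).toNat : ℤ) := by
        rcases le_total A 0 with h | h <;> simp [Int.toNat_of_nonneg, le_max_left] <;> omega
      have : (hx : ℤ) * S m1 h1 a1 K ≤ ((max A 0).toNat : ℤ) + K * mx := by
        rw [hF] at hFK; simp only at hFK; linarith
      have hnat : hx * S m1 h1 a1 K ≤ (max A 0).toNat + K * mx := by exact_mod_cast this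
      show S m1 h1 a1 K ≤ ((max A 0).toNat + K * mx) / hx
      rw [Nat.le_div_iff_mul_le hhx]
      linarith [hnat]
  · intro K
    -- goal: (ax + K*mx)/hx ≤ S2 K
    have key : ((max A 0).toNat : ℤ) + K * mx ≤ (hx : ℤ) * S m2 h2 a2 K + hx - 1 := by
      rcases le_or_gt A 0 with hA0 | hA0
      · -- ax = 0
        have hax0 : ((max A 0).toNat : ℤ) = 0 := by
          rw [max_eq_right hA0]; rfl
        rw [hax0]
        have hf1 : K * mx / hx ≤ K * m2 / h2 := floor_mono hhx hh2 hs2 K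
        have hf2 : K * m2 / h2 ≤ S m2 h2 a2 K := by
          unfold S
          exact Nat.div_le_div_right (by omega)
        have hf3 : K * mx < hx * (K * mx / hx) + hx := by
          have := Nat.div_add_mod (K * mx) hx
          have := Nat.mod_lt (K * mx) hhx
          omega
        have hf4 : hx * (K * mx / hx) ≤ hx * S m2 h2 a2 K :=
          Nat.mul_le_mul_left _ (le_trans hf1 hf2)
        have : K * mx < hx * S m2 h2 a2 K + hx := by omega
        push_cast
        omega
      · -- ax = A = F K* for some K* in Icc 1 h1
        obtain ⟨Ks, hKs, hAKs⟩ := Finset.exists_mem_eq_sup' hne F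
        rw [Finset.mem_Icc] at hKs
        have haxA : ((max A 0).toNat : ℤ) = A := by
          rw [max_eq_left (le_of_lt hA0), Int.toNat_of_nonneg (le_of_lt hA0)]
        have hAF : A = F Ks := hA.trans hAKs
        rw [haxA, hAF, hF]
        simp only
        -- need: hx * S1 Ks - Ks * mx + K * mx ≤ hx * S2 K + hx - 1
        rcases le_or_gt Ks K with hcase | hcase
        · obtain ⟨L, hL⟩ : ∃ L, K = Ks + L := ⟨K - Ks, by omega⟩
          have w2 : S m2 h2 a2 Ks + L * m2 / h2 ≤ S m2 h2 a2 K := by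
            rw [hL]; exact S_window_lower hh2 m2 a2 Ks L
          have hPK : S m1 h1 a1 Ks ≤ S m2 h2 a2 Ks := hP Ks
          have hf1 : L * mx / hx ≤ L * m2 / h2 := floor_mono hhx hh2 hs2 L
          have hf3 : L * mx < hx * (L * mx / hx) + hx := by
            have := Nat.div_add_mod (L * mx) hx
            have := Nat.mod_lt (L * mx) hhx
            omega
          have hchain : hx * S m1 h1 a1 Ks + L * mx
              < hx * S m2 h2 a2 K + hx := by
            have hmul : hx * (S m1 h1 a1 Ks + L * mx / hx)
                ≤ hx * S m2 h2 a2 K := by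
              refine Nat.mul_le_mul_left _ ?_
              calc S m1 h1 a1 Ks + L * mx / hx
                  ≤ S m2 h2 a2 Ks + L * m2 / h2 := by omega
                _ ≤ S m2 h2 a2 K := w2
            rw [Nat.mul_add] at hmul
            omega
          have hcast : (hx : ℤ) * S m1 h1 a1 Ks + L * mx
              < (hx : ℤ) * S m2 h2 a2 K + hx := by exact_mod_cast hchain
          have hprod : (K : ℤ) * mx = (Ks : ℤ) * mx + (L : ℤ) * mx := by
            rw [hL]; push_cast; ring
          linarith
        · obtain ⟨L, hL⟩ : ∃ L, Ks = K + L := ⟨Ks - K, by omega⟩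
          have w1 : S m1 h1 a1 Ks ≤ S m1 h1 a1 K + (L * m1 + h1 - 1) / h1 := by
            rw [hL]; exact S_window_upper hh1 m1 a1 K L
          have hPK : S m1 h1 a1 K ≤ S m2 h2 a2 K := hP K
          have hc1 : (L * m1 + h1 - 1) / h1 ≤ (L * mx + hx - 1) / hx :=
            ceil_mono hh1 hhx hs1 L
          have hc3 : hx * ((L * mx + hx - 1) / hx) ≤ L * mx + hx - 1 :=
            le_trans (le_of_eq (Nat.mul_comm _ _)) (Nat.div_mul_le_self _ _)
          have hchain : hx * S m1 h1 a1 Ks ≤ hx * S m2 h2 a2 K + L * mx + hx - 1 := by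
            have hmul : hx * S m1 h1 a1 Ks
                ≤ hx * (S m2 h2 a2 K + (L * mx + hx - 1) / hx) := by
              refine Nat.mul_le_mul_left _ ?_
              omega
            rw [Nat.mul_add] at hmul
            omega
          have hcast : (hx : ℤ) * S m1 h1 a1 Ks
              ≤ (hx : ℤ) * S m2 h2 a2 K + L * mx + hx - 1 := by
            have hx1 : 1 ≤ hx := hhx
            have := hchain
            push_cast
            omega
          have hprod : (Ks : ℤ) * mx = (K : ℤ) * mx + (L : ℤ) * mx := by
            rw [hL]; push_cast; ring
          linarith
    show ((max A 0).toNat + K * mx) / hx ≤ S m2 h2 a2 K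
    have hlt : (max A 0).toNat + K * mx < (S m2 h2 a2 K + 1) * hx := by
      have : ((max A 0).toNat : ℤ) + K * mx < ((S m2 h2 a2 K : ℤ) + 1) * hx := by
        have hx1 : (1 : ℤ) ≤ hx := by exact_mod_cast hhx
        nlinarith [key]
      exact_mod_cast this
    exact Nat.lt_succ_iff.mp ((Nat.div_lt_iff_lt_mul hhx).mpr hlt)

end NP6


namespace NP6

open NewtonPolygon

lemma m_le_h (ξ : NewtonPolygon) (r : ℕ) : ξ.m r ≤ ξ.h r := Nat.le_add_right _ _

lemma h_pos (ξ : NewtonPolygon) {r : ℕ} (hr1 : 1 ≤ r) (hr2 : r ≤ ξ.z) : 0 < ξ.h r := by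
  have hlt : r - 1 < ξ.seg.length := by
    have : ξ.z = ξ.seg.length := rfl
    omega
  have hget : ξ.seg.getD (r - 1) (0, 0) = ξ.seg.get ⟨r - 1, hlt⟩ := by
    rw [List.getD_eq_getElem?_getD, List.getElem?_eq_getElem hlt, Option.getD_some]
    rfl
  have hmem : ξ.seg.get ⟨r - 1, hlt⟩ ∈ ξ.seg := List.get_mem _ _
  have hp := ξ.pos _ hmem
  show (ξ.seg.getD (r - 1) (0, 0)).1 + (ξ.seg.getD (r - 1) (0, 0)).2 > 0
  rw [hget]
  exact hp

lemma slope_nat (ξ : NewtonPolygon) {r q : ℕ} (hr1 : 1 ≤ r) (hrq : r ≤ q) (hq : q ≤ ξ.z) :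
    ξ.m r * ξ.h q ≤ ξ.m q * ξ.h r := by
  have hltr : r - 1 < ξ.seg.length := by
    have : ξ.z = ξ.seg.length := rfl; omega
  have hltq : q - 1 < ξ.seg.length := by
    have : ξ.z = ξ.seg.length := rfl; omega
  have hgetr : ξ.seg.getD (r - 1) (0, 0) = ξ.seg.get ⟨r - 1, hltr⟩ := by
    rw [List.getD_eq_getElem?_getD, List.getElem?_eq_getElem hltr, Option.getD_some]; rfl
  have hgetq : ξ.seg.getD (q - 1) (0, 0) = ξ.seg.get ⟨q - 1, hltq⟩ := by
    rw [List.getD_eq_getElem?_getD, List.getElem?_eq_getElem hltq, Option.getD_some]; rfl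
  have hs := ξ.slopes ⟨r - 1, hltr⟩ ⟨q - 1, hltq⟩ (by
    show r - 1 ≤ q - 1
    omega)
  set pr := ξ.seg.get ⟨r - 1, hltr⟩ with hpr
  set pq := ξ.seg.get ⟨q - 1, hltq⟩ with hpq
  have hhr : 0 < pr.1 + pr.2 := ξ.pos _ (List.get_mem _ _)
  have hhq : 0 < pq.1 + pq.2 := ξ.pos _ (List.get_mem _ _)
  have hhrQ : (0:ℚ) < (pr.1 : ℚ) + pr.2 := by exact_mod_cast hhr
  have hhqQ : (0:ℚ) < (pq.1 : ℚ) + pq.2 := by exact_mod_cast hhq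
  rw [div_le_div_iff₀ hhqQ hhrQ] at hs
  have hsn : (pq.2 : ℚ) * ((pr.1 : ℚ) + pr.2) ≤ (pr.2 : ℚ) * ((pq.1 : ℚ) + pq.2) := hs
  have hnat : pq.2 * (pr.1 + pr.2) ≤ pr.2 * (pq.1 + pq.2) := by exact_mod_cast hsn
  have hmr : ξ.m r = pr.1 := by unfold NewtonPolygon.m; rw [hgetr]
  have hnr : ξ.n r = pr.2 := by unfold NewtonPolygon.n; rw [hgetr]
  have hmq : ξ.m q = pq.1 := by unfold NewtonPolygon.m; rw [hgetq]
  have hnq : ξ.n q = pq.2 := by unfold NewtonPolygon.n; rw [hgetq]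
  have hhr' : ξ.h r = pr.1 + pr.2 := by
    show ξ.m r + ξ.n r = pr.1 + pr.2
    rw [hmr, hnr]
  have hhq' : ξ.h q = pq.1 + pq.2 := by
    show ξ.m q + ξ.n q = pq.1 + pq.2
    rw [hmq, hnq]
  rw [hmr, hmq, hhr', hhq']
  nlinarith [hnat]

lemma pinv_iter (ξ : NewtonPolygon) (r i : ℕ) (hh : 0 < ξ.h r) (hi1 : 1 ≤ i)
    (hi2 : i ≤ ξ.h r) (k : ℕ) :
    ξ.pinv^[k] (r, i) = (r, (i - 1 + k * ξ.m r) % ξ.h r + 1) := by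
  induction k with
  | zero =>
      simp only [Function.iterate_zero, id_eq, Nat.zero_mul, Nat.add_zero]
      rw [Nat.mod_eq_of_lt (by omega)]
      exact congrArg (Prod.mk r) (by omega)
  | succ k ih =>
      rw [Function.iterate_succ_apply', ih]
      unfold NewtonPolygon.pinv
      simp only
      refine congrArg (Prod.mk r) ?_
      set c := (i - 1 + k * ξ.m r) % ξ.h r with hcdef
      have hc : ((c + 1 : ℕ) : ℤ) + (ξ.m r : ℤ) - 1 = ((c + ξ.m r : ℕ) : ℤ) := by
        push_cast; ring
      rw [hc]
      have hmodc : ((c + ξ.m r : ℕ) : ℤ) % ((ξ.h r : ℕ) : ℤ)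
          = (((c + ξ.m r) % ξ.h r : ℕ) : ℤ) := by
        push_cast; ring
      rw [hmodc, Int.toNat_natCast]
      have : (c + ξ.m r) % ξ.h r = (i - 1 + (k + 1) * ξ.m r) % ξ.h r := by
        rw [hcdef, Nat.mod_add_mod]
        congr 1
        ring
      rw [this]

lemma bexp_eq (ξ : NewtonPolygon) (r i : ℕ) (hr1 : 1 ≤ r) (hr2 : r ≤ ξ.z)
    (hi1 : 1 ≤ i) (hi2 : i ≤ ξ.h r) :
    ξ.bexp (r, i) = Bv (ξ.m r) (ξ.h r) (i - 1) := by
  have hh : 0 < ξ.h r := h_pos ξ hr1 hr2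
  unfold NewtonPolygon.bexp Bv
  refine tsum_congr fun k => ?_
  rw [pinv_iter ξ r i hh hi1 hi2 (k + 1)]
  have hD : ξ.dlt (r, (i - 1 + (k + 1) * ξ.m r) % ξ.h r + 1)
      = D (ξ.m r) (ξ.h r) (i - 1) (k + 1) := by
    unfold NewtonPolygon.dlt D
    simp only
    by_cases hcond : (i - 1 + (k + 1) * ξ.m r) % ξ.h r < ξ.m r
    · rw [if_pos (by omega), if_pos hcond]
    · rw [if_neg (by omega), if_neg hcond]
  rw [hD]

end NP6

/-- if `u = (r,i)`, `v = (q,j)` in `T(ξ)` satisfy `δ(u) = 0`, `δ(v) = 1`,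
`u < v` and `r + 1 < q`, then there is `t = (x,l) ∈ T(ξ)` with `r < x < q` and `u < t < v`. -/
theorem statement6 (ξ : NewtonPolygon) (u v : Symb) (hu : ξ.mem u) (hv : ξ.mem v)
    (hdu : ξ.dlt u = 0) (hdv : ξ.dlt v = 1) (huv : ξ.slt u v) (hrq : u.1 + 1 < v.1) :
    ∃ t : Symb, ξ.mem t ∧ u.1 < t.1 ∧ t.1 < v.1 ∧ ξ.slt u t ∧ ξ.slt t v := by
  obtain ⟨hr1, hr2, hi1, hi2⟩ := hu
  obtain ⟨hq1, hq2, hj1, hj2⟩ := hv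
  set r := u.1 with hrdef
  set q := v.1 with hqdef
  set x := r + 1 with hxdef
  have hx1 : 1 ≤ x := by omega
  have hxz : x ≤ ξ.z := by omega
  have hhr : 0 < ξ.h r := NP6.h_pos ξ hr1 hr2
  have hhq : 0 < ξ.h q := NP6.h_pos ξ hq1 hq2
  have hhx : 0 < ξ.h x := NP6.h_pos ξ hx1 hxz
  have hbu : ξ.bexp u = NP6.Bv (ξ.m r) (ξ.h r) (u.2 - 1) := by
    rw [show u = (u.1, u.2) from rfl]
    exact NP6.bexp_eq ξ r u.2 hr1 hr2 hi1 hi2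
  have hbv : ξ.bexp v = NP6.Bv (ξ.m q) (ξ.h q) (v.2 - 1) := by
    rw [show v = (v.1, v.2) from rfl]
    exact NP6.bexp_eq ξ q v.2 hq1 hq2 hj1 hj2
  have hble : ξ.bexp u ≤ ξ.bexp v := by
    rcases huv with h | ⟨h, _⟩
    · exact le_of_lt h
    · exact le_of_eq h
  rw [hbu, hbv] at hble
  have hsrq : ξ.m r * ξ.h q ≤ ξ.m q * ξ.h r := NP6.slope_nat ξ hr1 (by omega) hq2
  have hsrx : ξ.m r * ξ.h x ≤ ξ.m x * ξ.h r := NP6.slope_nat ξ hr1 (by omega) hxz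
  have hsxq : ξ.m x * ξ.h q ≤ ξ.m q * ξ.h x := NP6.slope_nat ξ hx1 (by omega) hq2
  have ha1 : u.2 - 1 < ξ.h r := by omega
  have ha2 : v.2 - 1 < ξ.h q := by omega
  have hP := NP6.claimP (NP6.m_le_h ξ r) hhr (NP6.m_le_h ξ q) hhq ha1 ha2 hsrq hble
  obtain ⟨ax, haxlt, hL, hR⟩ := NP6.exists_mid hhr hhq hhx ha1 ha2 hsrx hsxq hP
  refine ⟨(x, ax + 1), ⟨hx1, hxz, by omega, by show ax + 1 ≤ ξ.h x; omega⟩,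
    by omega, by omega, ?_, ?_⟩
  · have hbt : ξ.bexp (x, ax + 1) = NP6.Bv (ξ.m x) (ξ.h x) ax := by
      rw [NP6.bexp_eq ξ x (ax + 1) hx1 hxz (by omega) (by omega)]
      congr 1
    have hut : ξ.bexp u ≤ ξ.bexp (x, ax + 1) := by
      rw [hbu, hbt]
      exact NP6.Bv_mono (NP6.m_le_h ξ r) hhr (NP6.m_le_h ξ x) hhx ha1 haxlt hL
    rcases lt_or_eq_of_le hut with h | h
    · exact Or.inl h
    · exact Or.inr ⟨h, by omega⟩
  · have hbt : ξ.bexp (x, ax + 1) = NP6.Bv (ξ.m x) (ξ.h x) ax := by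
      rw [NP6.bexp_eq ξ x (ax + 1) hx1 hxz (by omega) (by omega)]
      congr 1
    have htv : ξ.bexp (x, ax + 1) ≤ ξ.bexp v := by
      rw [hbv, hbt]
      exact NP6.Bv_mono (NP6.m_le_h ξ x) hhx (NP6.m_le_h ξ q) hhq haxlt ha2 hR
    rcases lt_or_eq_of_le htv with h | h
    · exact Or.inl h
    · exact Or.inr ⟨h, by omega⟩
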